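/- Let (X,d,μ) be a space of homogeneous type, let p(·), q(·) ∈ 𝒫₁(X) ∩ LH satisfy 1/p(x) − 1/q(x) ≡ η for a constant η ∈ [0,1), let q_∞ be the LH_∞ limit value of q(·), let ω ∈ A_{p(·),q(·)}(X), and set W(x) = ω(x)^{q(x)}. Then there exist constants c, C > 0 such that for every ball B ⊆ X with ‖ω χ_B‖_{q(·)} ≥ 1 one has c·W(B)^{1/q_∞} ≤ ‖ω χ_B‖_{q(·)} ≤ C·W(B)^{1/q_∞}. -/

import Mathlib

open MeasureTheory ENNReal Set Filter Topology

noncomputable section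

variable {X : Type*}

/-- `d` is a quasi-metric on `X` with quasi-triangle constant `A0`. -/
def IsQuasiMetric (d : X → X → ℝ) (A0 : ℝ) : Prop :=
  1 ≤ A0 ∧ (∀ x y, 0 ≤ d x y) ∧ (∀ x y, d x y = 0 ↔ x = y) ∧
    (∀ x y, d x y = d y x) ∧ ∀ x y z, d x y ≤ A0 * (d x z + d z y)

/-- The quasi-metric ball `B(c,r)`. -/
def qball (d : X → X → ℝ) (c : X) (r : ℝ) : Set X := {y | d c y < r}

/-- The measure `μ` is doubling (with constant `Cμ`) on quasi-metric balls:
`0 < μ(B(x,2r)) ≤ Cμ·μ(B(x,r)) < ∞`. -/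
def IsDoubling [MeasurableSpace X] (d : X → X → ℝ) (μ : Measure X) (Cμ : ℝ≥0∞) : Prop :=
  1 ≤ Cμ ∧ ∀ (x : X) (r : ℝ), 0 < r →
    0 < μ (qball d x (2 * r)) ∧ μ (qball d x (2 * r)) ≤ Cμ * μ (qball d x r) ∧
      Cμ * μ (qball d x r) < ∞

/-- The Luxemburg norm `‖f‖_{p(·)}` for a variable (possibly infinite) exponent `p`. -/
def luxNorm [MeasurableSpace X] (μ : Measure X) (p : X → ℝ≥0∞) (f : X → ℝ≥0∞) : ℝ≥0∞ :=
  sInf {lam : ℝ≥0∞ | 0 < lam ∧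
    (∫⁻ x in {x | p x ≠ ∞}, (f x / lam) ^ (p x).toReal ∂μ) +
      essSup (fun x => f x / lam) (μ.restrict {x | p x = ∞}) ≤ 1}

/-- The class `𝒫₁(X)`: exponents with values in `[1,∞)` and `p₊ < ∞`. -/
def MemP1 [MeasurableSpace X] (μ : Measure X) (p : X → ℝ≥0∞) : Prop :=
  Measurable p ∧ (∀ x, 1 ≤ p x) ∧ (∀ x, p x ≠ ∞) ∧ essSup p μ < ∞

/-- The class `𝒫(X)`: additionally `1 < p₋`. -/
def MemP [MeasurableSpace X] (μ : Measure X) (p : X → ℝ≥0∞) : Prop :=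
  MemP1 μ p ∧ 1 < essInf p μ

/-- Local log-Hölder continuity `LH₀`. -/
def MemLH0 (d : X → X → ℝ) (p : X → ℝ≥0∞) : Prop :=
  ∃ C0 : ℝ, 0 ≤ C0 ∧ ∀ x y, d x y < 1 / 2 →
    |(p x).toReal - (p y).toReal| ≤ C0 / Real.log (Real.exp 1 + 1 / d x y)

/-- Log-Hölder decay at infinity `LH_∞` with base point `x0` and limit value `pinf`. -/
def MemLHinf (d : X → X → ℝ) (x0 : X) (pinf : ℝ) (p : X → ℝ≥0∞) : Prop :=
  ∃ Cinf : ℝ, 0 ≤ Cinf ∧ ∀ x, |(p x).toReal - pinf| ≤ Cinf / Real.log (Real.exp 1 + d x x0)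

/-- Global log-Hölder continuity `LH = LH₀ ∩ LH_∞`. -/
def MemLH (d : X → X → ℝ) (p : X → ℝ≥0∞) : Prop :=
  MemLH0 d p ∧ ∃ x0 pinf, MemLHinf d x0 pinf p

/-- `w` is a weight: measurable, positive and finite a.e., and locally integrable. -/
def IsWeight [MeasurableSpace X] (d : X → X → ℝ) (μ : Measure X) (w : X → ℝ≥0∞) : Prop :=
  Measurable w ∧ (∀ᵐ x ∂μ, 0 < w x ∧ w x < ∞) ∧
    ∀ (c : X) (r : ℝ), 0 < r → ∫⁻ x in qball d c r, w x ∂μ < ∞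

/-- The pointwise conjugate exponent `p′(·)`, `1/p(x) + 1/p′(x) = 1`. -/
def conjExp (p : X → ℝ≥0∞) : X → ℝ≥0∞ := fun x => if p x = ∞ then 1 else p x / (p x - 1)

/-- The `A_{p(·),q(·)}` characteristic constant
`sup_B μ(B)^{η−1} ‖w χ_B‖_{q(·)} ‖w⁻¹ χ_B‖_{p′(·)}`. -/
def ApqConst [MeasurableSpace X] (d : X → X → ℝ) (μ : Measure X) (η : ℝ)
    (p q : X → ℝ≥0∞) (w : X → ℝ≥0∞) : ℝ≥0∞ :=
  ⨆ (c : X) (r : ℝ) (_ : 0 < r),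
    μ (qball d c r) ^ (η - 1) * luxNorm μ q ((qball d c r).indicator w) *
      luxNorm μ (conjExp p) ((qball d c r).indicator fun x => (w x)⁻¹)

/-- The fractional maximal operator `M_η`. -/
def fracMax [MeasurableSpace X] (d : X → X → ℝ) (μ : Measure X) (η : ℝ)
    (f : X → ℝ≥0∞) (x : X) : ℝ≥0∞ :=
  ⨆ (c : X) (r : ℝ) (_ : 0 < r) (_ : x ∈ qball d c r),
    μ (qball d c r) ^ (η - 1) * ∫⁻ y in qball d c r, f y ∂μ

/-- The Muckenhoupt `A₁` condition: `Mw ≤ C w` a.e. -/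
def MemA1 [MeasurableSpace X] (d : X → X → ℝ) (μ : Measure X) (w : X → ℝ≥0∞) : Prop :=
  ∃ C : ℝ≥0∞, C ≠ ∞ ∧ ∀ᵐ x ∂μ, fracMax d μ 0 w x ≤ C * w x

/-- The Muckenhoupt `A_p` condition for `1 < p < ∞`. -/
def MemAp [MeasurableSpace X] (d : X → X → ℝ) (μ : Measure X) (p : ℝ)
    (w : X → ℝ≥0∞) : Prop :=
  (⨆ (c : X) (r : ℝ) (_ : 0 < r),
    ((μ (qball d c r))⁻¹ * ∫⁻ x in qball d c r, w x ∂μ) *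
      ((μ (qball d c r))⁻¹ * ∫⁻ x in qball d c r, w x ^ (-(1 / (p - 1))) ∂μ) ^ (p - 1)) ≠ ∞

/-- The class `A_∞ = ⋃_{p ≥ 1} A_p`. -/
def MemAinfty [MeasurableSpace X] (d : X → X → ℝ) (μ : Measure X) (w : X → ℝ≥0∞) : Prop :=
  MemA1 d μ w ∨ ∃ p : ℝ, 1 < p ∧ MemAp d μ p w


/-!
Write `N(B) = ‖ωχ_B‖_{q(·)}` and `W(B) = ∫_B ω^{q(·)}`. Testing the `A_{p(·),q(·)}` condition on
balls containing `B(x₀,1)` and using doubling shows that `N(B(x₀,T))`, hence `W(B(x₀,T))`,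
grows at most polynomially in `T`, say `W(B(x₀,T)) ≤ C T^D`.

If `q_∞ < 1`, then `q ≥ 1` and `LH_∞` force `X` to be a ball, so `ω ∈ L^{q(·)}(X)` and both
`N(B) ≥ 1` and `W(B)` range over a fixed compact subinterval of `(0,∞)`.

If `q_∞ ≥ 1`, split the modular `∫_B (ω/λ)^{q(·)}` at the ball `B(x₀,T)`, `T = λ^{1/(2D)}`.
Inside, polynomial growth makes the contribution `O(λ^{-1/2})`; outside, `LH_∞` gives
`λ^{|q(x)-q_∞|} ≤ exp(2 C_∞ D)`, so `q(x)` may be replaced by `q_∞` at a bounded cost.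
Taking `λ^{q_∞} ≈ W(B)` gives the upper bound and `λ = 2N(B)` the lower bound.
-/

theorem one_le_toReal_of_one_le {a : ℝ≥0∞} (h1 : 1 ≤ a) (hT : a ≠ ∞) : 1 ≤ a.toReal := by
  simpa using ENNReal.toReal_mono hT h1

theorem one_le_ofReal_exp {x : ℝ} (hx : 0 ≤ x) : 1 ≤ ENNReal.ofReal (Real.exp x) := by
  simpa using ENNReal.ofReal_le_ofReal (Real.one_le_exp hx)

theorem mul_inv_two_mul_le (a : ℝ≥0∞) : a * (2 * a)⁻¹ ≤ 2⁻¹ := by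
  rw [ENNReal.mul_inv (.inl two_ne_zero) (.inl ENNReal.ofNat_ne_top), mul_left_comm]
  exact mul_le_of_le_one_right zero_le a.mul_inv_le_one

theorem Real.rpow_logb_two_comm {c t : ℝ} (hc : 0 < c) (ht : 0 < t) :
    c ^ Real.logb 2 t = t ^ Real.logb 2 c := by
  rw [Real.rpow_def_of_pos hc, Real.rpow_def_of_pos ht, Real.logb, Real.logb]
  ring_nf

theorem exists_ae_toReal_le_of_essSup_lt_top [MeasurableSpace X] {μ : Measure X}
    {q : X → ℝ≥0∞} (hq : essSup q μ < ∞) : ∃ Q : ℝ, 0 < Q ∧ ∀ᵐ x ∂μ, (q x).toReal ≤ Q :=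
  ⟨max 1 (essSup q μ).toReal, lt_max_of_lt_left one_pos, (ENNReal.ae_le_essSup q).mono
    fun _ hx => (ENNReal.toReal_mono hq.ne hx).trans (le_max_right _ _)⟩

section RpowBounds

variable {a l : ℝ≥0∞} {s t : ℝ}

theorem div_rpow_le_inv_rpow_mul_of_one_le (hl : 1 ≤ l) (hst : s ≤ t) (ht : 0 ≤ t) :
    (a / l) ^ t ≤ (l ^ s)⁻¹ * a ^ t := by
  rw [ENNReal.div_rpow_of_nonneg _ _ ht, div_eq_mul_inv, mul_comm]
  gcongr

theorem div_rpow_le_inv_rpow_mul_of_le_one (hl : l ≤ 1) (hts : t ≤ s) (ht : 0 ≤ t) :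
    (a / l) ^ t ≤ (l ^ s)⁻¹ * a ^ t := by
  rw [ENNReal.div_rpow_of_nonneg _ _ ht, div_eq_mul_inv, mul_comm]
  gcongr ?_⁻¹ * _
  exact ENNReal.rpow_le_rpow_of_exponent_ge hl hts

theorem rpow_le_rpow_mul_div_rpow (hl : 1 ≤ l) (hl' : l ≠ ∞) (hts : t ≤ s) (ht : 0 ≤ t) :
    a ^ t ≤ l ^ s * (a / l) ^ t := by
  calc a ^ t = l ^ t * (a / l) ^ t := by
        rw [← ENNReal.mul_rpow_of_nonneg _ _ ht,
          ENNReal.mul_div_cancel (zero_lt_one.trans_le hl).ne' hl']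
    _ ≤ l ^ s * (a / l) ^ t := by gcongr

theorem rpow_le_rpow_abs_of_one_le (h1 : 1 ≤ a) (hal : a ≤ l) (s : ℝ) : a ^ s ≤ l ^ |s| :=
  (ENNReal.rpow_le_rpow_of_exponent_le h1 (le_abs_self s)).trans
    (ENNReal.rpow_le_rpow hal (abs_nonneg s))

theorem inv_rpow_abs_le_rpow_of_one_le (h1 : 1 ≤ a) (hal : a ≤ l) (s : ℝ) :
    (l ^ |s|)⁻¹ ≤ a ^ s :=
  calc (l ^ |s|)⁻¹ ≤ (a ^ |s|)⁻¹ := by gcongr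
    _ = a ^ (-|s|) := (ENNReal.rpow_neg _ _).symm
    _ ≤ a ^ s := ENNReal.rpow_le_rpow_of_exponent_le h1 (neg_abs_le s)

variable {E : ℝ≥0∞} {u ε : ℝ}

theorem div_rpow_le_mul_inv_rpow_mul (hl1 : 1 ≤ l) (hlT : l ≠ ∞) (ht : 0 ≤ t)
    (htu : |t - u| ≤ ε) (hE : l ^ ε ≤ E) : (a / l) ^ t ≤ E * (l ^ u)⁻¹ * a ^ t := by
  have hl0 : l ≠ 0 := (zero_lt_one.trans_le hl1).ne'
  calc (a / l) ^ t ≤ (l ^ (u - ε))⁻¹ * a ^ t :=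
        div_rpow_le_inv_rpow_mul_of_one_le hl1 (by linarith [neg_abs_le (t - u)]) ht
    _ = l ^ ε * (l ^ u)⁻¹ * a ^ t := by
        rw [← ENNReal.rpow_neg, ← ENNReal.rpow_neg, ← ENNReal.rpow_add _ _ hl0 hlT, neg_sub,
          sub_eq_add_neg]
    _ ≤ E * (l ^ u)⁻¹ * a ^ t := by gcongr

theorem rpow_le_mul_rpow_mul_div_rpow (hl1 : 1 ≤ l) (hlT : l ≠ ∞) (ht : 0 ≤ t)
    (htu : |t - u| ≤ ε) (hE : l ^ ε ≤ E) : a ^ t ≤ E * l ^ u * (a / l) ^ t := by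
  have hl0 : l ≠ 0 := (zero_lt_one.trans_le hl1).ne'
  calc a ^ t ≤ l ^ (u + ε) * (a / l) ^ t :=
        rpow_le_rpow_mul_div_rpow hl1 hlT (by linarith [le_abs_self (t - u)]) ht
    _ = l ^ ε * l ^ u * (a / l) ^ t := by rw [ENNReal.rpow_add _ _ hl0 hlT, mul_comm (l ^ u)]
    _ ≤ E * l ^ u * (a / l) ^ t := by gcongr

end RpowBounds

theorem rpow_div_log_le_of_rpow_le {l : ℝ≥0∞} (hl1 : 1 ≤ l) (hlT : l ≠ ∞) {C D s : ℝ}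
    (hC : 0 ≤ C) (hD : 0 < D) (hs : l.toReal ^ D⁻¹ ≤ s) :
    l ^ (C / Real.log (Real.exp 1 + s)) ≤ ENNReal.ofReal (Real.exp (C * D)) := by
  have hL1 : 1 ≤ l.toReal := one_le_toReal_of_one_le hl1 hlT
  have hL0 : 0 < l.toReal := one_pos.trans_le hL1
  have hs1 : 1 ≤ s := (Real.one_le_rpow hL1 (inv_nonneg.mpr hD.le)).trans hs
  have hlog1 : 1 ≤ Real.log (Real.exp 1 + s) := by
    rw [Real.le_log_iff_exp_le (by positivity)]
    linarith
  have hlogl : Real.log l.toReal ≤ D * Real.log (Real.exp 1 + s) :=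
    calc Real.log l.toReal = D * Real.log (l.toReal ^ D⁻¹) := by
          rw [Real.log_rpow hL0, ← mul_assoc, mul_inv_cancel₀ hD.ne', one_mul]
      _ ≤ D * Real.log (Real.exp 1 + s) := by
          gcongr
          linarith [Real.exp_pos 1]
  rw [← ENNReal.ofReal_toReal hlT, ENNReal.ofReal_rpow_of_pos hL0, Real.rpow_def_of_pos hL0]
  refine ENNReal.ofReal_le_ofReal (Real.exp_le_exp.mpr ?_)
  rw [mul_div_assoc', div_le_iff₀ (by linarith)]
  linarith [mul_le_mul_of_nonneg_left hlogl hC]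

theorem qball_eq_univ_of_logHolderDecay {q : X → ℝ≥0∞} {d : X → X → ℝ} {x₀ : X}
    {qinf Cinf : ℝ} (hd0 : ∀ x y, 0 ≤ d x y) (hq1 : ∀ x, 1 ≤ (q x).toReal) (hqinf : qinf < 1)
    (hLH : ∀ x, |(q x).toReal - qinf| ≤ Cinf / Real.log (Real.exp 1 + d x₀ x)) :
    qball d x₀ (Real.exp (Cinf / (1 - qinf))) = univ := by
  refine eq_univ_of_forall fun x => ?_
  have hlog : 0 < Real.log (Real.exp 1 + d x₀ x) :=
    Real.log_pos (by linarith [Real.add_one_le_exp 1, hd0 x₀ x])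
  have h1 : 1 - qinf ≤ Cinf / Real.log (Real.exp 1 + d x₀ x) :=
    (le_abs.mpr (.inl (by linarith [hq1 x]))).trans (hLH x)
  rw [le_div_iff₀ hlog, mul_comm, ← le_div_iff₀ (by linarith),
    Real.log_le_iff_le_exp (by linarith [Real.exp_pos 1, hd0 x₀ x])] at h1
  show d x₀ x < _
  linarith [Real.exp_pos 1]

section Luxemburg

variable [MeasurableSpace X] {μ : Measure X}

theorem luxNorm_mono (e : X → ℝ≥0∞) {f g : X → ℝ≥0∞} (h : ∀ x, f x ≤ g x) :
    luxNorm μ e f ≤ luxNorm μ e g := by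
  refine sInf_le_sInf fun l ⟨hl, hle⟩ => ⟨hl, le_trans (add_le_add ?_ ?_) hle⟩
  · exact lintegral_mono fun x =>
      ENNReal.rpow_le_rpow (ENNReal.div_le_div_right (h x) _) ENNReal.toReal_nonneg
  · exact essSup_mono_ae (.of_forall fun x => ENNReal.div_le_div_right (h x) _)

variable {q ω : X → ℝ≥0∞} {B : Set X}

theorem luxNorm_indicator_eq_sInf (hB : MeasurableSet B) (hq : ∀ x, 0 < (q x).toReal) :
    luxNorm μ q (B.indicator ω)
      = sInf {l : ℝ≥0∞ | 0 < l ∧ ∫⁻ x in B, (ω x / l) ^ (q x).toReal ∂μ ≤ 1} := by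
  have hqT : ∀ x, q x ≠ ∞ := fun x => (ENNReal.toReal_pos_iff.mp (hq x)).2.ne
  have hfin : {x | q x ≠ ∞} = univ := eq_univ_of_forall hqT
  have hinf : {x | q x = ∞} = ∅ := eq_empty_of_forall_notMem hqT
  have hind : ∀ l x, (B.indicator ω x / l) ^ (q x).toReal
      = B.indicator (fun y => (ω y / l) ^ (q y).toReal) x := by
    intro l x
    by_cases hx : x ∈ B
    · simp [hx]
    · simp [hx, ENNReal.zero_rpow_of_pos (hq x)]
  simp only [luxNorm, hfin, hinf, Measure.restrict_empty, essSup_measure_zero,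
    Measure.restrict_univ, bot_eq_zero', add_zero, hind, lintegral_indicator hB]

theorem luxNorm_indicator_le (hB : MeasurableSet B) (hq : ∀ x, 0 < (q x).toReal)
    {l : ℝ≥0∞} (hl : 0 < l) (h : ∫⁻ x in B, (ω x / l) ^ (q x).toReal ∂μ ≤ 1) :
    luxNorm μ q (B.indicator ω) ≤ l := by
  rw [luxNorm_indicator_eq_sInf hB hq]
  exact sInf_le ⟨hl, h⟩

theorem lintegral_div_rpow_le_one_of_luxNorm_lt (hB : MeasurableSet B)
    (hq : ∀ x, 0 < (q x).toReal) {l : ℝ≥0∞} (h : luxNorm μ q (B.indicator ω) < l) :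
    ∫⁻ x in B, (ω x / l) ^ (q x).toReal ∂μ ≤ 1 := by
  rw [luxNorm_indicator_eq_sInf hB hq] at h
  obtain ⟨b, ⟨-, hb⟩, hbl⟩ := sInf_lt_iff.mp h
  exact le_trans (lintegral_mono fun x => by gcongr) hb

variable {Q : ℝ}

theorem one_le_lintegral_rpow_of_one_le_luxNorm (hB : MeasurableSet B)
    (hq : ∀ x, 0 < (q x).toReal) (hQ : 0 < Q) (hqQ : ∀ᵐ x ∂μ, (q x).toReal ≤ Q)
    (hN : 1 ≤ luxNorm μ q (B.indicator ω)) : 1 ≤ ∫⁻ x in B, ω x ^ (q x).toReal ∂μ := by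
  by_contra! hW
  obtain ⟨c, hWc, hc1⟩ := exists_between hW
  have hc0 : c ≠ 0 := (hWc.trans_le' zero_le).ne'
  have hcT : c ≠ ∞ := hc1.ne_top
  set l := c ^ Q⁻¹
  have hl0 : l ≠ 0 := by simp [l, hc0, hcT]
  have hl1 : l < 1 := ENNReal.rpow_lt_one hc1 (inv_pos.mpr hQ)
  have hlQ : l ^ Q = c := by
    rw [← ENNReal.rpow_mul, inv_mul_cancel₀ hQ.ne', ENNReal.rpow_one]
  have hmod : ∫⁻ x in B, (ω x / l) ^ (q x).toReal ∂μ ≤ 1 :=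
    calc ∫⁻ x in B, (ω x / l) ^ (q x).toReal ∂μ
        ≤ ∫⁻ x in B, (l ^ Q)⁻¹ * ω x ^ (q x).toReal ∂μ :=
          lintegral_mono_ae ((ae_restrict_of_ae hqQ).mono fun x hx =>
            div_rpow_le_inv_rpow_mul_of_le_one hl1.le hx ENNReal.toReal_nonneg)
      _ = c⁻¹ * ∫⁻ x in B, ω x ^ (q x).toReal ∂μ := by
          rw [hlQ, lintegral_const_mul' _ _ (ENNReal.inv_ne_top.mpr hc0)]
      _ ≤ 1 := by
          rw [ENNReal.inv_mul_le_iff hc0 hcT, mul_one]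
          exact hWc.le
  exact (hN.trans (luxNorm_indicator_le hB hq (pos_iff_ne_zero.mpr hl0) hmod)).not_gt hl1

theorem lintegral_rpow_le_of_luxNorm_le (hB : MeasurableSet B) (hq : ∀ x, 0 < (q x).toReal)
    (hQ : 0 ≤ Q) (hqQ : ∀ᵐ x ∂μ, (q x).toReal ≤ Q) {l : ℝ≥0∞} (hl1 : 1 ≤ l) (hlT : l ≠ ∞)
    (hN : luxNorm μ q (B.indicator ω) ≤ l) :
    ∫⁻ x in B, ω x ^ (q x).toReal ∂μ ≤ (2 * l) ^ Q := by
  have h2l1 : 1 ≤ 2 * l := hl1.trans (le_mul_of_one_le_left zero_le one_le_two)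
  have h2lT : 2 * l ≠ ∞ := ENNReal.mul_ne_top ENNReal.ofNat_ne_top hlT
  have hlt : luxNorm μ q (B.indicator ω) < 2 * l :=
    hN.trans_lt (two_mul l ▸ ENNReal.lt_add_right hlT (zero_lt_one.trans_le hl1).ne')
  calc ∫⁻ x in B, ω x ^ (q x).toReal ∂μ
      ≤ ∫⁻ x in B, (2 * l) ^ Q * (ω x / (2 * l)) ^ (q x).toReal ∂μ :=
        lintegral_mono_ae ((ae_restrict_of_ae hqQ).mono fun x hx =>
          rpow_le_rpow_mul_div_rpow h2l1 h2lT hx ENNReal.toReal_nonneg)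
    _ = (2 * l) ^ Q * ∫⁻ x in B, (ω x / (2 * l)) ^ (q x).toReal ∂μ :=
        lintegral_const_mul' _ _ (ENNReal.rpow_ne_top_of_nonneg hQ h2lT)
    _ ≤ (2 * l) ^ Q := by
        simpa using mul_le_mul_right
          (lintegral_div_rpow_le_one_of_luxNorm_lt hB hq hlt) ((2 * l) ^ Q)

end Luxemburg

section Positivity

variable [MeasurableSpace X] {μ : Measure X} {e : X → ℝ≥0∞} {E : Set X} {a : ℝ≥0∞}

theorem min_le_luxNorm_indicator_const (he : Measurable e) (he1 : ∀ x, 1 ≤ e x)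
    (hE : MeasurableSet E) :
    min a (a * μ (E ∩ {x | e x ≠ ∞})) ≤ luxNorm μ e (E.indicator fun _ => a) := by
  refine le_sInf fun l ⟨hl0, hl⟩ => ?_
  rcases le_or_gt a l with hal | hla
  · exact (min_le_left _ _).trans hal
  refine (min_le_right _ _).trans ?_
  have hlT : l ≠ ∞ := hla.ne_top
  have hal1 : 1 ≤ a / l := by
    rw [ENNReal.le_div_iff_mul_le (.inl hl0.ne') (.inl hlT), one_mul]
    exact hla.le
  have hEf : MeasurableSet (E ∩ {x | e x ≠ ∞}) :=
    hE.inter (he (measurableSet_singleton ∞)).compl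
  have hmod : a / l * μ (E ∩ {x | e x ≠ ∞}) ≤ 1 :=
    calc a / l * μ (E ∩ {x | e x ≠ ∞})
        = ∫⁻ _ in E ∩ {x | e x ≠ ∞}, a / l ∂μ := (setLIntegral_const _ _).symm
      _ ≤ ∫⁻ x in E ∩ {x | e x ≠ ∞}, (E.indicator (fun _ => a) x / l) ^ (e x).toReal ∂μ := by
          refine setLIntegral_mono' hEf fun x ⟨hxE, hxe⟩ => ?_
          rw [indicator_of_mem hxE]
          exact ENNReal.le_rpow_self_of_one_le hal1 (one_le_toReal_of_one_le (he1 x) hxe)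
      _ ≤ ∫⁻ x in {x | e x ≠ ∞}, (E.indicator (fun _ => a) x / l) ^ (e x).toReal ∂μ :=
          lintegral_mono_set inter_subset_right
      _ ≤ 1 := le_self_add.trans hl
  rwa [← ENNReal.mul_div_right_comm, ENNReal.div_le_iff hl0.ne' hlT, one_mul] at hmod

theorem le_luxNorm_indicator_const (he : Measurable e) (hEi : μ (E ∩ {x | e x = ∞}) ≠ 0) :
    a ≤ luxNorm μ e (E.indicator fun _ => a) := by
  refine le_sInf fun l ⟨hl0, hl⟩ => ?_
  by_contra! hla
  have hess : ∀ᵐ x ∂μ.restrict {x | e x = ∞}, E.indicator (fun _ => a) x / l ≤ 1 :=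
    (ENNReal.ae_le_essSup _).mono fun x hx => hx.trans (le_add_self.trans hl)
  have hbad : E ∩ {x | e x = ∞} ⊆ {x | ¬ E.indicator (fun _ => a) x / l ≤ 1} := by
    rintro x ⟨hxE, -⟩
    rw [mem_ofPred_eq, indicator_of_mem hxE, not_le,
      ENNReal.lt_div_iff_mul_lt (.inl hl0.ne') (.inl hla.ne_top), one_mul]
    exact hla
  have hnull := measure_mono_null hbad (ae_iff.mp hess)
  have hinf : MeasurableSet {x | e x = ∞} := he (measurableSet_singleton ∞)
  rw [Measure.restrict_apply' hinf, inter_assoc, inter_self] at hnull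
  exact hEi hnull

theorem exists_measure_inter_inv_le_pos {B : Set X} (hB0 : μ B ≠ 0) {g : X → ℝ≥0∞}
    (hg : ∀ᵐ x ∂μ, 0 < g x) : ∃ n : ℕ, 0 < μ (B ∩ {x | ((n : ℝ≥0∞) + 1)⁻¹ ≤ g x}) := by
  refine exists_measure_pos_of_not_measure_iUnion_null fun h0 => hB0 ?_
  refine measure_mono_null (fun x hxB => ?_) (measure_union_null h0 (ae_iff.mp hg))
  by_cases hx : 0 < g x
  · obtain ⟨n, hn⟩ := ENNReal.exists_inv_nat_lt hx.ne'
    exact .inl (mem_iUnion.mpr ⟨n, hxB, (ENNReal.inv_le_inv.mpr le_self_add).trans hn.le⟩)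
  · exact .inr hx

theorem luxNorm_indicator_pos (he : Measurable e) (he1 : ∀ x, 1 ≤ e x) {B : Set X}
    (hB : MeasurableSet B) (hB0 : μ B ≠ 0) {g : X → ℝ≥0∞} (hg : Measurable g)
    (hgpos : ∀ᵐ x ∂μ, 0 < g x) : 0 < luxNorm μ e (B.indicator g) := by
  obtain ⟨n, hn⟩ := exists_measure_inter_inv_le_pos hB0 hgpos
  set E := B ∩ {x | ((n : ℝ≥0∞) + 1)⁻¹ ≤ g x}
  have ha : ((n : ℝ≥0∞) + 1)⁻¹ ≠ 0 := by simp
  have hmono : luxNorm μ e (E.indicator fun _ => ((n : ℝ≥0∞) + 1)⁻¹)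
      ≤ luxNorm μ e (B.indicator g) := by
    refine luxNorm_mono e fun x => ?_
    by_cases hx : x ∈ E
    · rw [indicator_of_mem hx, indicator_of_mem hx.1]
      exact hx.2
    · simp [indicator_of_notMem hx]
  refine lt_of_lt_of_le ?_ hmono
  by_cases hEi : μ (E ∩ {x | e x = ∞}) = 0
  · have hEf : μ (E ∩ {x | e x ≠ ∞}) ≠ 0 := by
      refine fun h0 => hn.ne' (measure_mono_null (fun x hx => ?_) (measure_union_null hEi h0))
      by_cases hxe : e x = ∞
      exacts [.inl ⟨hx, hxe⟩, .inr ⟨hx, hxe⟩]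
    exact (lt_min (pos_iff_ne_zero.mpr ha) (ENNReal.mul_pos ha hEf)).trans_le
      (min_le_luxNorm_indicator_const he he1 (hB.inter (hg measurableSet_Ici)))
  · exact (pos_iff_ne_zero.mpr ha).trans_le (le_luxNorm_indicator_const he hEi)

end Positivity

theorem qball_mono (d : X → X → ℝ) (c : X) {r R : ℝ} (h : r ≤ R) :
    qball d c r ⊆ qball d c R :=
  fun _ hy => lt_of_lt_of_le hy h

namespace IsDoubling

variable [MeasurableSpace X] {d : X → X → ℝ} {μ : Measure X} {Cμ : ℝ≥0∞}

theorem measure_qball_pos (h : IsDoubling d μ Cμ) (c : X) {r : ℝ} (hr : 0 < r) :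
    0 < μ (qball d c r) := by
  simpa [mul_div_cancel₀] using (h.2 c (r / 2) (half_pos hr)).1

theorem measure_qball_ne_top (h : IsDoubling d μ Cμ) (c : X) {r : ℝ} (hr : 0 < r) :
    μ (qball d c r) ≠ ∞ :=
  ne_top_of_le_ne_top (h.2 c r hr).2.2.ne (le_mul_of_one_le_left zero_le h.1)

theorem const_ne_top (h : IsDoubling d μ Cμ) (c : X) : Cμ ≠ ∞ := by
  rintro rfl
  simpa [ENNReal.top_mul (h.measure_qball_pos c one_pos).ne'] using (h.2 c 1 one_pos).2.2

theorem measure_qball_two_pow_mul_le (h : IsDoubling d μ Cμ) (c : X) {r : ℝ} (hr : 0 < r)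
    (k : ℕ) : μ (qball d c (2 ^ k * r)) ≤ Cμ ^ k * μ (qball d c r) := by
  induction k with
  | zero => simp
  | succ k ih =>
    calc μ (qball d c (2 ^ (k + 1) * r)) = μ (qball d c (2 * (2 ^ k * r))) := by ring_nf
      _ ≤ Cμ * μ (qball d c (2 ^ k * r)) := (h.2 c _ (by positivity)).2.1
      _ ≤ Cμ ^ (k + 1) * μ (qball d c r) := by rw [pow_succ']; grw [ih, mul_assoc]

theorem measure_qball_le_rpow (h : IsDoubling d μ Cμ) (c : X) {r R : ℝ} (hr : 0 < r)
    (hrR : r ≤ R) :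
    μ (qball d c R) ≤
      Cμ * ENNReal.ofReal ((R / r) ^ Real.logb 2 Cμ.toReal) * μ (qball d c r) := by
  have hCT := h.const_ne_top c
  have hC1 : 1 ≤ Cμ.toReal := one_le_toReal_of_one_le h.1 hCT
  have ht1 : 1 ≤ R / r := (one_le_div hr).mpr hrR
  set k := ⌈Real.logb 2 (R / r)⌉₊
  have hRk : R ≤ 2 ^ k * r := by
    rw [← div_le_iff₀ hr, ← Real.rpow_natCast, ← Real.logb_le_iff_le_rpow one_lt_two
      (by positivity)]
    exact Nat.le_ceil _
  have hk : (k : ℝ) ≤ Real.logb 2 (R / r) + 1 :=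
    (Nat.ceil_lt_add_one (Real.logb_nonneg one_lt_two ht1)).le
  have hCk : Cμ.toReal ^ k ≤ (R / r) ^ Real.logb 2 Cμ.toReal * Cμ.toReal := by
    rw [← Real.rpow_logb_two_comm (by positivity) (by positivity),
      ← Real.rpow_add_one (by positivity), ← Real.rpow_natCast]
    exact Real.rpow_le_rpow_of_exponent_le hC1 hk
  replace hCk : Cμ ^ k ≤ ENNReal.ofReal ((R / r) ^ Real.logb 2 Cμ.toReal) * Cμ := by
    have := ENNReal.ofReal_le_ofReal hCk
    rwa [ENNReal.ofReal_pow ENNReal.toReal_nonneg, ENNReal.ofReal_mul (by positivity),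
      ENNReal.ofReal_toReal hCT] at this
  calc μ (qball d c R) ≤ μ (qball d c (2 ^ k * r)) := measure_mono (qball_mono d c hRk)
    _ ≤ Cμ ^ k * μ (qball d c r) := h.measure_qball_two_pow_mul_le c hr k
    _ ≤ Cμ * ENNReal.ofReal ((R / r) ^ Real.logb 2 Cμ.toReal) * μ (qball d c r) := by
        grw [hCk, mul_comm Cμ]

end IsDoubling

section Apq

theorem one_le_conjExp {p : X → ℝ≥0∞} {x : X} (hp : 1 ≤ p x) : 1 ≤ conjExp p x := by
  unfold conjExp
  split_ifs with hpT
  · exact le_rfl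
  · rw [ENNReal.le_div_iff_mul_le (.inr (zero_lt_one.trans_le hp).ne') (.inr hpT), one_mul]
    exact tsub_le_self

variable [MeasurableSpace X]

theorem measurable_conjExp {p : X → ℝ≥0∞} (hp : Measurable p) : Measurable (conjExp p) :=
  Measurable.ite (hp (measurableSet_singleton ∞)) measurable_const
    (hp.div (hp.sub measurable_const))

variable {d : X → X → ℝ} {μ : Measure X} {η : ℝ} {p q ω : X → ℝ≥0∞}

theorem mul_luxNorm_le_ApqConst (c : X) {r : ℝ} (hr : 0 < r) :
    μ (qball d c r) ^ (η - 1) * luxNorm μ q ((qball d c r).indicator ω) *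
      luxNorm μ (conjExp p) ((qball d c r).indicator fun x => (ω x)⁻¹)
        ≤ ApqConst d μ η p q ω :=
  le_iSup₂_of_le c r (le_iSup_of_le hr le_rfl)

theorem luxNorm_le_ApqConst_mul (hA : ApqConst d μ η p q ω ≠ ∞) {c c₀ : X} {r r₀ : ℝ}
    (hr : 0 < r) (hsub : qball d c₀ r₀ ⊆ qball d c r) (hμ0 : μ (qball d c r) ≠ 0)
    (hμT : μ (qball d c r) ≠ ∞)
    (hm0 : luxNorm μ (conjExp p) ((qball d c₀ r₀).indicator fun x => (ω x)⁻¹) ≠ 0) :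
    luxNorm μ q ((qball d c r).indicator ω)
      ≤ ApqConst d μ η p q ω * (luxNorm μ (conjExp p) ((qball d c₀ r₀).indicator
          fun x => (ω x)⁻¹))⁻¹ * μ (qball d c r) ^ (1 - η) := by
  set m₀ := luxNorm μ (conjExp p) ((qball d c₀ r₀).indicator fun x => (ω x)⁻¹)
  have hm : m₀ ≤ luxNorm μ (conjExp p) ((qball d c r).indicator fun x => (ω x)⁻¹) :=
    luxNorm_mono _ fun x => indicator_le_indicator_of_subset hsub (fun _ => zero_le) x
  have hprod : luxNorm μ q ((qball d c r).indicator ω) * (μ (qball d c r) ^ (η - 1) * m₀)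
      ≤ ApqConst d μ η p q ω := by
    grw [← mul_luxNorm_le_ApqConst c hr, hm]
    exact le_of_eq (by ring)
  have hμη0 : μ (qball d c r) ^ (η - 1) ≠ 0 := by simp [hμ0, hμT]
  have hμηT : μ (qball d c r) ^ (η - 1) ≠ ∞ := by simp [hμ0, hμT]
  rw [← ENNReal.le_div_iff_mul_le (.inl (mul_ne_zero hμη0 hm0)) (.inr hA), div_eq_mul_inv,
    ENNReal.mul_inv (.inl hμη0) (.inl hμηT), ← ENNReal.rpow_neg, neg_sub] at hprod
  exact hprod.trans_eq (by ring)

theorem exists_luxNorm_qball_le_rpow {Cμ : ℝ≥0∞} (hball : ∀ c r, MeasurableSet (qball d c r))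
    (hdbl : IsDoubling d μ Cμ) (hη1 : η < 1) (hpm : Measurable p) (hp1 : ∀ x, 1 ≤ p x)
    (hωm : Measurable ω) (hωT : ∀ᵐ x ∂μ, ω x < ∞) (hA : ApqConst d μ η p q ω ≠ ∞) (x₀ : X) :
    ∃ K : ℝ≥0∞, K ≠ ∞ ∧ ∃ s : ℝ, 0 ≤ s ∧ ∀ T : ℝ, 1 ≤ T →
      luxNorm μ q ((qball d x₀ T).indicator ω) ≤ K * ENNReal.ofReal (T ^ s) := by
  set m₁ := luxNorm μ (conjExp p) ((qball d x₀ 1).indicator fun x => (ω x)⁻¹)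
  have hm₁ : m₁ ≠ 0 := (luxNorm_indicator_pos (measurable_conjExp hpm)
    (fun x => one_le_conjExp (hp1 x)) (hball x₀ 1) (hdbl.measure_qball_pos x₀ one_pos).ne'
    hωm.inv (hωT.mono fun x hx => ENNReal.inv_pos.mpr hx.ne)).ne'
  have hCT := hdbl.const_ne_top x₀
  set σ := Real.logb 2 Cμ.toReal
  have hσ : 0 ≤ σ := Real.logb_nonneg one_lt_two (one_le_toReal_of_one_le hdbl.1 hCT)
  refine ⟨ApqConst d μ η p q ω * m₁⁻¹ * (Cμ * μ (qball d x₀ 1)) ^ (1 - η), ?_, σ * (1 - η),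
    mul_nonneg hσ (by linarith), fun T hT => ?_⟩
  · exact ENNReal.mul_ne_top (ENNReal.mul_ne_top hA (ENNReal.inv_ne_top.mpr hm₁))
      (ENNReal.rpow_ne_top_of_nonneg (by linarith)
        (ENNReal.mul_ne_top hCT (hdbl.measure_qball_ne_top x₀ one_pos)))
  have hT0 : 0 < T := one_pos.trans_le hT
  have hη : 0 ≤ 1 - η := by linarith
  have hμ := hdbl.measure_qball_le_rpow x₀ one_pos hT
  rw [div_one] at hμ
  calc luxNorm μ q ((qball d x₀ T).indicator ω)
      ≤ ApqConst d μ η p q ω * m₁⁻¹ * μ (qball d x₀ T) ^ (1 - η) :=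
        luxNorm_le_ApqConst_mul hA hT0 (qball_mono d x₀ hT) (hdbl.measure_qball_pos x₀ hT0).ne'
          (hdbl.measure_qball_ne_top x₀ hT0) hm₁
    _ ≤ ApqConst d μ η p q ω * m₁⁻¹ *
          (Cμ * μ (qball d x₀ 1) * ENNReal.ofReal (T ^ σ)) ^ (1 - η) := by
        gcongr
        exact hμ.trans_eq (mul_right_comm _ _ _)
    _ = ApqConst d μ η p q ω * m₁⁻¹ * (Cμ * μ (qball d x₀ 1)) ^ (1 - η) *
          ENNReal.ofReal (T ^ (σ * (1 - η))) := by
        rw [ENNReal.mul_rpow_of_nonneg _ _ hη, ENNReal.ofReal_rpow_of_nonneg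
          (by positivity) hη, ← Real.rpow_mul hT0.le]
        ring

end Apq

section Growth

variable [MeasurableSpace X] {μ : Measure X} {q ω : X → ℝ≥0∞} {d : X → X → ℝ} {x₀ : X}

def HasPolyGrowthAt (μ : Measure X) (q ω : X → ℝ≥0∞) (d : X → X → ℝ) (x₀ : X) (C : ℝ≥0∞)
    (D : ℝ) : Prop :=
  ∀ T : ℝ, 1 ≤ T → ∫⁻ x in qball d x₀ T, ω x ^ (q x).toReal ∂μ ≤ C * ENNReal.ofReal (T ^ D)

theorem exists_hasPolyGrowthAt (hball : ∀ T, MeasurableSet (qball d x₀ T))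
    (hq : ∀ x, 0 < (q x).toReal) {Q : ℝ} (hQ : 0 ≤ Q) (hqQ : ∀ᵐ x ∂μ, (q x).toReal ≤ Q)
    {K : ℝ≥0∞} (hK : K ≠ ∞) {s : ℝ} (hs : 0 ≤ s)
    (hN : ∀ T : ℝ, 1 ≤ T →
      luxNorm μ q ((qball d x₀ T).indicator ω) ≤ K * ENNReal.ofReal (T ^ s)) :
    ∃ C : ℝ≥0∞, C ≠ ∞ ∧ ∃ D : ℝ, 0 < D ∧ HasPolyGrowthAt μ q ω d x₀ C D := by
  have hK1T : max K 1 ≠ ∞ := max_ne_top hK one_ne_top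
  refine ⟨(2 * max K 1) ^ Q, ENNReal.rpow_ne_top_of_nonneg hQ
    (ENNReal.mul_ne_top ENNReal.ofNat_ne_top hK1T), s * Q + 1, by positivity, fun T hT => ?_⟩
  have hl1 : 1 ≤ max K 1 * ENNReal.ofReal (T ^ s) := one_le_mul (le_max_right _ _)
    (by simpa using ENNReal.ofReal_le_ofReal (Real.one_le_rpow hT hs))
  calc ∫⁻ x in qball d x₀ T, ω x ^ (q x).toReal ∂μ
      ≤ (2 * (max K 1 * ENNReal.ofReal (T ^ s))) ^ Q :=
        lintegral_rpow_le_of_luxNorm_le (hball T) hq hQ hqQ hl1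
          (ENNReal.mul_ne_top hK1T ENNReal.ofReal_ne_top)
          ((hN T hT).trans (by gcongr; exact le_max_left _ _))
    _ = (2 * max K 1) ^ Q * ENNReal.ofReal (T ^ (s * Q)) := by
        rw [← mul_assoc, ENNReal.mul_rpow_of_nonneg _ _ hQ, ENNReal.ofReal_rpow_of_nonneg
          (by positivity) hQ, ← Real.rpow_mul (by positivity)]
    _ ≤ (2 * max K 1) ^ Q * ENNReal.ofReal (T ^ (s * Q + 1)) := by
        gcongr
        linarith

end Growth

section LogHolderDecay

variable [MeasurableSpace X] {μ : Measure X} {q ω : X → ℝ≥0∞} {d : X → X → ℝ} {x₀ : X}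
  {qinf Cinf D : ℝ} {C l : ℝ≥0∞} {B : Set X}

theorem lintegral_qball_rpow_inv_le (hD : 0 < D) (hgrow : HasPolyGrowthAt μ q ω d x₀ C D)
    (hl1 : 1 ≤ l) (hlT : l ≠ ∞) :
    ∫⁻ x in qball d x₀ (l.toReal ^ (2 * D)⁻¹), ω x ^ (q x).toReal ∂μ ≤ C * l ^ (2⁻¹ : ℝ) := by
  have hL1 := one_le_toReal_of_one_le hl1 hlT
  refine (hgrow _ (Real.one_le_rpow hL1 (by positivity))).trans_eq ?_
  rw [← Real.rpow_mul (by positivity), ← ENNReal.ofReal_rpow_of_nonneg ENNReal.toReal_nonneg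
    (by positivity), ENNReal.ofReal_toReal hlT]
  congr 2
  field_simp

theorem lintegral_inter_qball_div_rpow_le (hq1 : ∀ x, 1 ≤ (q x).toReal) (hD : 0 < D)
    (hgrow : HasPolyGrowthAt μ q ω d x₀ C D) (hl1 : 1 ≤ l) (hlT : l ≠ ∞)
    (hCl : 2 * C ≤ l ^ (2⁻¹ : ℝ)) :
    ∫⁻ x in B ∩ qball d x₀ (l.toReal ^ (2 * D)⁻¹), (ω x / l) ^ (q x).toReal ∂μ ≤ 2⁻¹ := by
  have hl0 : l ≠ 0 := (zero_lt_one.trans_le hl1).ne'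
  calc ∫⁻ x in B ∩ qball d x₀ (l.toReal ^ (2 * D)⁻¹), (ω x / l) ^ (q x).toReal ∂μ
      ≤ ∫⁻ x in B ∩ qball d x₀ (l.toReal ^ (2 * D)⁻¹), (l ^ (1 : ℝ))⁻¹ * ω x ^ (q x).toReal ∂μ :=
        lintegral_mono fun x => div_rpow_le_inv_rpow_mul_of_one_le hl1 (hq1 x) ENNReal.toReal_nonneg
    _ ≤ l⁻¹ * ∫⁻ x in qball d x₀ (l.toReal ^ (2 * D)⁻¹), ω x ^ (q x).toReal ∂μ := by
        rw [ENNReal.rpow_one, lintegral_const_mul' _ _ (ENNReal.inv_ne_top.mpr hl0)]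
        gcongr
        exact inter_subset_right
    _ ≤ l⁻¹ * (C * l ^ (2⁻¹ : ℝ)) := by grw [lintegral_qball_rpow_inv_le hD hgrow hl1 hlT]
    _ = C * (l ^ (2⁻¹ : ℝ))⁻¹ := by
        rw [mul_left_comm, ← ENNReal.rpow_neg_one, ← ENNReal.rpow_add _ _ hl0 hlT,
          ← ENNReal.rpow_neg]
        norm_num
    _ ≤ C * (2 * C)⁻¹ := by gcongr
    _ ≤ 2⁻¹ := mul_inv_two_mul_le C

theorem lintegral_sdiff_qball_div_rpow_le (hball : ∀ T, MeasurableSet (qball d x₀ T))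
    (hB : MeasurableSet B) (hCinf : 0 ≤ Cinf)
    (hLH : ∀ x, |(q x).toReal - qinf| ≤ Cinf / Real.log (Real.exp 1 + d x₀ x))
    (hD : 0 < D) (hl1 : 1 ≤ l) (hlT : l ≠ ∞) :
    ∫⁻ x in B \ qball d x₀ (l.toReal ^ (2 * D)⁻¹), (ω x / l) ^ (q x).toReal ∂μ
      ≤ ENNReal.ofReal (Real.exp (Cinf * (2 * D))) * (l ^ qinf)⁻¹ *
          ∫⁻ x in B, ω x ^ (q x).toReal ∂μ := by
  have hl0 : l ≠ 0 := (zero_lt_one.trans_le hl1).ne'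
  calc ∫⁻ x in B \ qball d x₀ (l.toReal ^ (2 * D)⁻¹), (ω x / l) ^ (q x).toReal ∂μ
      ≤ ∫⁻ x in B \ qball d x₀ (l.toReal ^ (2 * D)⁻¹),
          ENNReal.ofReal (Real.exp (Cinf * (2 * D))) * (l ^ qinf)⁻¹ * ω x ^ (q x).toReal ∂μ :=
        setLIntegral_mono' (hB.diff (hball _)) fun x hx =>
          div_rpow_le_mul_inv_rpow_mul hl1 hlT ENNReal.toReal_nonneg (hLH x)
            (rpow_div_log_le_of_rpow_le hl1 hlT hCinf (by positivity) (not_lt.mp hx.2))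
    _ ≤ _ := by
        rw [lintegral_const_mul' _ _ (ENNReal.mul_ne_top ENNReal.ofReal_ne_top
          (ENNReal.inv_ne_top.mpr (by simp [hl0, hlT])))]
        gcongr
        exact sdiff_subset

theorem lintegral_sdiff_qball_rpow_le (hball : ∀ T, MeasurableSet (qball d x₀ T))
    (hB : MeasurableSet B) (hCinf : 0 ≤ Cinf)
    (hLH : ∀ x, |(q x).toReal - qinf| ≤ Cinf / Real.log (Real.exp 1 + d x₀ x))
    (hD : 0 < D) (hl1 : 1 ≤ l) (hlT : l ≠ ∞) :
    ∫⁻ x in B \ qball d x₀ (l.toReal ^ (2 * D)⁻¹), ω x ^ (q x).toReal ∂μ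
      ≤ ENNReal.ofReal (Real.exp (Cinf * (2 * D))) * l ^ qinf *
          ∫⁻ x in B, (ω x / l) ^ (q x).toReal ∂μ := by
  have hl0 : l ≠ 0 := (zero_lt_one.trans_le hl1).ne'
  calc ∫⁻ x in B \ qball d x₀ (l.toReal ^ (2 * D)⁻¹), ω x ^ (q x).toReal ∂μ
      ≤ ∫⁻ x in B \ qball d x₀ (l.toReal ^ (2 * D)⁻¹),
          ENNReal.ofReal (Real.exp (Cinf * (2 * D))) * l ^ qinf * (ω x / l) ^ (q x).toReal ∂μ :=
        setLIntegral_mono' (hB.diff (hball _)) fun x hx =>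
          rpow_le_mul_rpow_mul_div_rpow hl1 hlT ENNReal.toReal_nonneg (hLH x)
            (rpow_div_log_le_of_rpow_le hl1 hlT hCinf (by positivity) (not_lt.mp hx.2))
    _ ≤ _ := by
        rw [lintegral_const_mul' _ _ (ENNReal.mul_ne_top ENNReal.ofReal_ne_top
          (by simp [hl0, hlT]))]
        gcongr
        exact sdiff_subset


theorem lintegral_div_rpow_le_one_of_growth (hq1 : ∀ x, 1 ≤ (q x).toReal)
    (hball : ∀ T, MeasurableSet (qball d x₀ T)) (hB : MeasurableSet B) (hCinf : 0 ≤ Cinf)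
    (hLH : ∀ x, |(q x).toReal - qinf| ≤ Cinf / Real.log (Real.exp 1 + d x₀ x))
    (hD : 0 < D) (hgrow : HasPolyGrowthAt μ q ω d x₀ C D) (hl1 : 1 ≤ l) (hlT : l ≠ ∞)
    (hCl : 2 * C ≤ l ^ (2⁻¹ : ℝ))
    (hWl : 2 * (ENNReal.ofReal (Real.exp (Cinf * (2 * D))) * ∫⁻ x in B, ω x ^ (q x).toReal ∂μ)
      ≤ l ^ qinf) :
    ∫⁻ x in B, (ω x / l) ^ (q x).toReal ∂μ ≤ 1 := by
  set EW := ENNReal.ofReal (Real.exp (Cinf * (2 * D))) * ∫⁻ x in B, ω x ^ (q x).toReal ∂μ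
  have hfar : ∫⁻ x in B \ qball d x₀ (l.toReal ^ (2 * D)⁻¹), (ω x / l) ^ (q x).toReal ∂μ
      ≤ 2⁻¹ :=
    calc _ ≤ EW * (l ^ qinf)⁻¹ := by
          grw [lintegral_sdiff_qball_div_rpow_le hball hB hCinf hLH hD hl1 hlT, mul_right_comm]
      _ ≤ EW * (2 * EW)⁻¹ := by gcongr
      _ ≤ 2⁻¹ := mul_inv_two_mul_le EW
  rw [← lintegral_inter_add_sdiff _ B (hball (l.toReal ^ (2 * D)⁻¹))]
  exact (add_le_add (lintegral_inter_qball_div_rpow_le hq1 hD hgrow hl1 hlT hCl) hfar).trans_eq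
    ENNReal.inv_two_add_inv_two

theorem lintegral_rpow_le_of_lintegral_div_rpow_le_one
    (hball : ∀ T, MeasurableSet (qball d x₀ T)) (hB : MeasurableSet B) (hqinf : 2⁻¹ ≤ qinf)
    (hCinf : 0 ≤ Cinf)
    (hLH : ∀ x, |(q x).toReal - qinf| ≤ Cinf / Real.log (Real.exp 1 + d x₀ x))
    (hD : 0 < D) (hgrow : HasPolyGrowthAt μ q ω d x₀ C D) (hl1 : 1 ≤ l) (hlT : l ≠ ∞)
    (hmod : ∫⁻ x in B, (ω x / l) ^ (q x).toReal ∂μ ≤ 1) :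
    ∫⁻ x in B, ω x ^ (q x).toReal ∂μ
      ≤ (C + ENNReal.ofReal (Real.exp (Cinf * (2 * D)))) * l ^ qinf :=
  calc ∫⁻ x in B, ω x ^ (q x).toReal ∂μ
      = ∫⁻ x in B ∩ qball d x₀ (l.toReal ^ (2 * D)⁻¹), ω x ^ (q x).toReal ∂μ +
          ∫⁻ x in B \ qball d x₀ (l.toReal ^ (2 * D)⁻¹), ω x ^ (q x).toReal ∂μ :=
        (lintegral_inter_add_sdiff _ B (hball _)).symm
    _ ≤ C * l ^ (2⁻¹ : ℝ) + ENNReal.ofReal (Real.exp (Cinf * (2 * D))) * l ^ qinf * 1 := by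
        gcongr
        · exact (lintegral_mono_set inter_subset_right).trans
            (lintegral_qball_rpow_inv_le hD hgrow hl1 hlT)
        · exact (lintegral_sdiff_qball_rpow_le hball hB hCinf hLH hD hl1 hlT).trans (by gcongr)
    _ ≤ (C + ENNReal.ofReal (Real.exp (Cinf * (2 * D)))) * l ^ qinf := by
        grw [ENNReal.rpow_le_rpow_of_exponent_le hl1 hqinf, mul_one, add_mul]

end LogHolderDecay

section Comparability

variable [MeasurableSpace X] {μ : Measure X} {q ω : X → ℝ≥0∞} {d : X → X → ℝ} {x₀ : X}
  {qinf Cinf D : ℝ} {C : ℝ≥0∞}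

def LuxNormComparable (μ : Measure X) (q ω : X → ℝ≥0∞) (e : ℝ) : Prop :=
  ∃ c C : ℝ≥0∞, 0 < c ∧ C ≠ ∞ ∧ ∀ B, MeasurableSet B → 1 ≤ luxNorm μ q (B.indicator ω) →
    c * (∫⁻ x in B, ω x ^ (q x).toReal ∂μ) ^ e ≤ luxNorm μ q (B.indicator ω) ∧
      luxNorm μ q (B.indicator ω) ≤ C * (∫⁻ x in B, ω x ^ (q x).toReal ∂μ) ^ e

theorem exists_luxNorm_indicator_le_mul_rpow (hq1 : ∀ x, 1 ≤ (q x).toReal)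
    (hball : ∀ T, MeasurableSet (qball d x₀ T)) (hqinf : 0 < qinf) (hCinf : 0 ≤ Cinf)
    (hLH : ∀ x, |(q x).toReal - qinf| ≤ Cinf / Real.log (Real.exp 1 + d x₀ x))
    (hD : 0 < D) (hC : C ≠ ∞) (hgrow : HasPolyGrowthAt μ q ω d x₀ C D) :
    ∃ A : ℝ≥0∞, A ≠ ∞ ∧ ∀ B, MeasurableSet B → 1 ≤ ∫⁻ x in B, ω x ^ (q x).toReal ∂μ →
      luxNorm μ q (B.indicator ω) ≤ A * (∫⁻ x in B, ω x ^ (q x).toReal ∂μ) ^ (1 / qinf) := by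
  set E := ENNReal.ofReal (Real.exp (Cinf * (2 * D)))
  set A := 2 * E + (2 * C) ^ (2 * qinf)
  have hAT : A ≠ ∞ := ENNReal.add_ne_top.mpr ⟨ENNReal.mul_ne_top ENNReal.ofNat_ne_top
    ENNReal.ofReal_ne_top, ENNReal.rpow_ne_top_of_nonneg (by positivity)
      (ENNReal.mul_ne_top ENNReal.ofNat_ne_top hC)⟩
  have hA1 : 1 ≤ A := (one_le_ofReal_exp (by positivity)).trans
    ((le_mul_of_one_le_left zero_le one_le_two).trans le_self_add)
  refine ⟨A ^ (1 / qinf), ENNReal.rpow_ne_top_of_nonneg (by positivity) hAT, fun B hB hW1 => ?_⟩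
  set W := ∫⁻ x in B, ω x ^ (q x).toReal ∂μ
  rcases eq_or_ne W ∞ with hWT | hWT
  · rw [hWT, ENNReal.top_rpow_of_pos (by positivity),
      ENNReal.mul_top (zero_lt_one.trans_le (ENNReal.one_le_rpow hA1 (by positivity))).ne']
    exact le_top
  set l := (A * W) ^ (1 / qinf)
  have hlq : l ^ qinf = A * W := by
    rw [← ENNReal.rpow_mul, one_div_mul_cancel hqinf.ne', ENNReal.rpow_one]
  have hl1 : 1 ≤ l := ENNReal.one_le_rpow (one_le_mul hA1 hW1) (by positivity)
  have hCl : 2 * C ≤ l ^ (2⁻¹ : ℝ) := by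
    rw [← ENNReal.rpow_le_rpow_iff (show 0 < 2 * qinf by positivity), ← ENNReal.rpow_mul,
      show 2⁻¹ * (2 * qinf) = qinf by ring, hlq]
    exact le_add_self.trans (le_mul_of_one_le_right zero_le hW1)
  have hWl : 2 * (E * W) ≤ l ^ qinf := by
    rw [hlq, ← mul_assoc]
    gcongr
    exact le_self_add
  calc luxNorm μ q (B.indicator ω)
      ≤ l := luxNorm_indicator_le hB (fun x => one_pos.trans_le (hq1 x))
        (zero_lt_one.trans_le hl1) (lintegral_div_rpow_le_one_of_growth hq1 hball hB hCinf hLH hD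
          hgrow hl1 (ENNReal.rpow_ne_top_of_nonneg (by positivity) (ENNReal.mul_ne_top hAT hWT))
          hCl hWl)
    _ = A ^ (1 / qinf) * W ^ (1 / qinf) := ENNReal.mul_rpow_of_nonneg _ _ (by positivity)

theorem exists_mul_rpow_lintegral_le_luxNorm (hq1 : ∀ x, 1 ≤ (q x).toReal)
    (hball : ∀ T, MeasurableSet (qball d x₀ T)) (hqinf : 2⁻¹ ≤ qinf) (hCinf : 0 ≤ Cinf)
    (hLH : ∀ x, |(q x).toReal - qinf| ≤ Cinf / Real.log (Real.exp 1 + d x₀ x))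
    (hD : 0 < D) (hC : C ≠ ∞) (hgrow : HasPolyGrowthAt μ q ω d x₀ C D) :
    ∃ c : ℝ≥0∞, 0 < c ∧ ∀ B, MeasurableSet B → 1 ≤ luxNorm μ q (B.indicator ω) →
      c * (∫⁻ x in B, ω x ^ (q x).toReal ∂μ) ^ (1 / qinf) ≤ luxNorm μ q (B.indicator ω) := by
  have hqinf0 : 0 < qinf := by linarith
  set CE := C + ENNReal.ofReal (Real.exp (Cinf * (2 * D)))
  set A := (CE * 2 ^ qinf) ^ (1 / qinf)
  have hA0 : A ≠ 0 := by
    have : CE ≠ 0 := (zero_lt_one.trans_le ((one_le_ofReal_exp (by positivity)).trans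
      le_add_self)).ne'
    simp [A, this, hqinf0, hqinf0.not_gt]
  have hAT : A ≠ ∞ := ENNReal.rpow_ne_top_of_nonneg (by positivity) (ENNReal.mul_ne_top
    (ENNReal.add_ne_top.mpr ⟨hC, ENNReal.ofReal_ne_top⟩) (by simp))
  refine ⟨A⁻¹, ENNReal.inv_pos.mpr hAT, fun B hB hN1 => ?_⟩
  set N := luxNorm μ q (B.indicator ω)
  rcases eq_or_ne N ∞ with hNT | hNT
  · exact hNT ▸ le_top
  have hNlt : N < 2 * N := by
    rw [two_mul]
    exact ENNReal.lt_add_right hNT (zero_lt_one.trans_le hN1).ne'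
  have hW : ∫⁻ x in B, ω x ^ (q x).toReal ∂μ ≤ CE * 2 ^ qinf * N ^ qinf := by
    grw [lintegral_rpow_le_of_lintegral_div_rpow_le_one hball hB hqinf hCinf hLH hD hgrow
      (hN1.trans hNlt.le) (ENNReal.mul_ne_top ENNReal.ofNat_ne_top hNT)
      (lintegral_div_rpow_le_one_of_luxNorm_lt hB (fun x => one_pos.trans_le (hq1 x)) hNlt),
      ENNReal.mul_rpow_of_nonneg _ _ hqinf0.le, mul_assoc]
  calc A⁻¹ * (∫⁻ x in B, ω x ^ (q x).toReal ∂μ) ^ (1 / qinf)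
      ≤ A⁻¹ * (CE * 2 ^ qinf * N ^ qinf) ^ (1 / qinf) := by gcongr
    _ = N := by
        rw [ENNReal.mul_rpow_of_nonneg _ _ (by positivity), ← ENNReal.rpow_mul,
          mul_one_div_cancel hqinf0.ne', ENNReal.rpow_one, ← mul_assoc,
          ENNReal.inv_mul_cancel hA0 hAT, one_mul]

theorem luxNormComparable_of_logHolderDecay (hq1 : ∀ x, 1 ≤ (q x).toReal)
    (hball : ∀ T, MeasurableSet (qball d x₀ T)) {Q : ℝ} (hQ : 0 < Q)
    (hqQ : ∀ᵐ x ∂μ, (q x).toReal ≤ Q) (hqinf : 1 ≤ qinf) (hCinf : 0 ≤ Cinf)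
    (hLH : ∀ x, |(q x).toReal - qinf| ≤ Cinf / Real.log (Real.exp 1 + d x₀ x))
    (hD : 0 < D) (hC : C ≠ ∞) (hgrow : HasPolyGrowthAt μ q ω d x₀ C D) :
    LuxNormComparable μ q ω (1 / qinf) := by
  obtain ⟨c, hc, hlower⟩ := exists_mul_rpow_lintegral_le_luxNorm hq1 hball (by linarith) hCinf
    hLH hD hC hgrow
  obtain ⟨A, hA, hupper⟩ := exists_luxNorm_indicator_le_mul_rpow hq1 hball (by linarith) hCinf
    hLH hD hC hgrow
  exact ⟨c, A, hc, hA, fun B hB hN1 => ⟨hlower B hB hN1, hupper B hB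
    (one_le_lintegral_rpow_of_one_le_luxNorm hB (fun x => one_pos.trans_le (hq1 x)) hQ hqQ hN1)⟩⟩

theorem luxNormComparable_of_luxNorm_ne_top (hq : ∀ x, 0 < (q x).toReal) {Q : ℝ} (hQ : 0 < Q)
    (hqQ : ∀ᵐ x ∂μ, (q x).toReal ≤ Q) (hω : luxNorm μ q ω ≠ ∞) (e : ℝ) :
    LuxNormComparable μ q ω e := by
  set M := (2 * max (luxNorm μ q ω) 1) ^ Q
  have hMT : M ≠ ∞ := ENNReal.rpow_ne_top_of_nonneg hQ.le
    (ENNReal.mul_ne_top ENNReal.ofNat_ne_top (max_ne_top hω one_ne_top))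
  have hMe0 : M ^ |e| ≠ 0 := by
    have : M ≠ 0 := by simp [M, hQ, hQ.le]
    simp [this, hMT]
  have hMeT : M ^ |e| ≠ ∞ := ENNReal.rpow_ne_top_of_nonneg (abs_nonneg e) hMT
  refine ⟨(M ^ |e|)⁻¹, luxNorm μ q ω * M ^ |e|, ENNReal.inv_pos.mpr hMeT,
    ENNReal.mul_ne_top hω hMeT, fun B hB hN1 => ?_⟩
  have hW1 := one_le_lintegral_rpow_of_one_le_luxNorm hB hq hQ hqQ hN1
  have hWM : ∫⁻ x in B, ω x ^ (q x).toReal ∂μ ≤ M := by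
    refine (lintegral_mono_set (subset_univ B)).trans ?_
    refine lintegral_rpow_le_of_luxNorm_le MeasurableSet.univ hq hQ.le hqQ (le_max_right _ _)
      (max_ne_top hω one_ne_top) ?_
    rw [indicator_univ]
    exact le_max_left _ _
  have hNω : luxNorm μ q (B.indicator ω) ≤ luxNorm μ q ω :=
    luxNorm_mono q fun x => indicator_le_self B ω x
  constructor
  · calc (M ^ |e|)⁻¹ * (∫⁻ x in B, ω x ^ (q x).toReal ∂μ) ^ e
        ≤ (M ^ |e|)⁻¹ * M ^ |e| := by grw [rpow_le_rpow_abs_of_one_le hW1 hWM]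
      _ = 1 := ENNReal.inv_mul_cancel hMe0 hMeT
      _ ≤ _ := hN1
  · calc luxNorm μ q (B.indicator ω) ≤ luxNorm μ q ω * (M ^ |e| * (M ^ |e|)⁻¹) := by
          rw [ENNReal.mul_inv_cancel hMe0 hMeT, mul_one]
          exact hNω
      _ ≤ luxNorm μ q ω * M ^ |e| * (∫⁻ x in B, ω x ^ (q x).toReal ∂μ) ^ e := by
          grw [inv_rpow_abs_le_rpow_of_one_le hW1 hWM, mul_assoc]

end Comparability

theorem statement9_general {X : Type*} [MeasurableSpace X]
    (d : X → X → ℝ) (A0 : ℝ) (μ : Measure X) (Cμ : ℝ≥0∞)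
    (hd : IsQuasiMetric d A0)
    (hball : ∀ (c : X) (r : ℝ), MeasurableSet (qball d c r))
    (hdbl : IsDoubling d μ Cμ)
    (η : ℝ) (hη1 : η < 1)
    (p q : X → ℝ≥0∞) (hp : MemP1 μ p) (hq : MemP1 μ q)
    (x0 : X) (qinf : ℝ) (hqinf : MemLHinf d x0 qinf q)
    (ω : X → ℝ≥0∞) (hω : IsWeight d μ ω)
    (hA : ApqConst d μ η p q ω ≠ ∞) :
    ∃ cc CC : ℝ≥0∞, 0 < cc ∧ CC ≠ ∞ ∧ ∀ (c : X) (r : ℝ), 0 < r →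
      1 ≤ luxNorm μ q ((qball d c r).indicator ω) →
        cc * (∫⁻ x in qball d c r, ω x ^ (q x).toReal ∂μ) ^ (1 / qinf) ≤
            luxNorm μ q ((qball d c r).indicator ω) ∧
          luxNorm μ q ((qball d c r).indicator ω) ≤
            CC * (∫⁻ x in qball d c r, ω x ^ (q x).toReal ∂μ) ^ (1 / qinf) := by
  obtain ⟨-, hd0, -, hdsym, -⟩ := hd
  obtain ⟨-, hq1, hqT, hqS⟩ := hq
  have hq1' : ∀ x, 1 ≤ (q x).toReal := fun x => one_le_toReal_of_one_le (hq1 x) (hqT x)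
  have hq0 : ∀ x, 0 < (q x).toReal := fun x => one_pos.trans_le (hq1' x)
  obtain ⟨Q, hQ, hqQ⟩ := exists_ae_toReal_le_of_essSup_lt_top hqS
  obtain ⟨K, hK, s, hs, hN⟩ := exists_luxNorm_qball_le_rpow hball hdbl hη1 hp.1 hp.2.1 hω.1
    (hω.2.1.mono fun _ hx => hx.2) hA x0
  obtain ⟨Cinf, hCinf, hLH⟩ := hqinf
  replace hLH : ∀ x, |(q x).toReal - qinf| ≤ Cinf / Real.log (Real.exp 1 + d x0 x) :=
    fun x => hdsym x0 x ▸ hLH x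
  have hcomp : LuxNormComparable μ q ω (1 / qinf) := by
    rcases lt_or_ge qinf 1 with hlt | hge
    · refine luxNormComparable_of_luxNorm_ne_top hq0 hQ hqQ ?_ _
      have hR : 1 ≤ Real.exp (Cinf / (1 - qinf)) :=
        Real.one_le_exp (div_nonneg hCinf (by linarith))
      rw [← indicator_univ ω, ← qball_eq_univ_of_logHolderDecay hd0 hq1' hlt hLH]
      exact ne_top_of_le_ne_top (ENNReal.mul_ne_top hK ENNReal.ofReal_ne_top) (hN _ hR)
    · obtain ⟨C, hC, D, hD, hgrow⟩ := exists_hasPolyGrowthAt (hball x0) hq0 hQ.le hqQ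
        hK hs hN
      exact luxNormComparable_of_logHolderDecay hq1' (hball x0) hQ hqQ hge hCinf hLH hD hC hgrow
  obtain ⟨cc, CC, hcc, hCC, hcomp⟩ := hcomp
  exact ⟨cc, CC, hcc, hCC, fun c r _ hN1 => hcomp _ (hball c r) hN1⟩

/-- If `ω ∈ A_{p(·),q(·)}` and `‖ωχ_B‖_{q(·)} ≥ 1`, then
`‖ωχ_B‖_{q(·)} ≈ W(B)^{1/q_∞}` with `W = ω^{q(·)}`. -/
theorem statement9 {X : Type*} [MeasurableSpace X]
    (d : X → X → ℝ) (A0 : ℝ) (μ : Measure X) (Cμ : ℝ≥0∞)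
    (hd : IsQuasiMetric d A0)
    (hball : ∀ (c : X) (r : ℝ), MeasurableSet (qball d c r))
    (hdbl : IsDoubling d μ Cμ)
    (η : ℝ) (hη0 : 0 ≤ η) (hη1 : η < 1)
    (p q : X → ℝ≥0∞) (hp : MemP1 μ p) (hq : MemP1 μ q)
    (hpLH : MemLH d p) (hqLH0 : MemLH0 d q)
    (x0 : X) (qinf : ℝ) (hqinf : MemLHinf d x0 qinf q)
    (hpq : ∀ x, (p x)⁻¹ = (q x)⁻¹ + ENNReal.ofReal η)
    (ω : X → ℝ≥0∞) (hω : IsWeight d μ ω)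
    (hA : ApqConst d μ η p q ω ≠ ∞) :
    ∃ cc CC : ℝ≥0∞, 0 < cc ∧ CC ≠ ∞ ∧ ∀ (c : X) (r : ℝ), 0 < r →
      1 ≤ luxNorm μ q ((qball d c r).indicator ω) →
        cc * (∫⁻ x in qball d c r, ω x ^ (q x).toReal ∂μ) ^ (1 / qinf) ≤
            luxNorm μ q ((qball d c r).indicator ω) ∧
          luxNorm μ q ((qball d c r).indicator ω) ≤
            CC * (∫⁻ x in qball d c r, ω x ^ (q x).toReal ∂μ) ^ (1 / qinf) :=
  statement9_general d A0 μ Cμ hd hball hdbl η hη1 p q hp hq x0 qinf hqinf ω hω hA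

end
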